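/- Let μ be the Borel probability measure on [0,1] with density ρ(x) = c·x^{-α} (suitably normalized) for α ∈ (1/2, 1). Then the correlation dimension of μ exists and equals 2(1−α). -/

import Mathlib

/-!
The measure `ν = c x^{-α} dx` on `(0, ∞)` is homogeneous under dilations,
`ν (r • s) = r^{1-α} ν s`, so `∫ ν(B(x,r)) dν(x) = r^{2(1-α)} ∫ ν(B(x,1)) dν(x)`. The last
integral is finite exactly because `2α > 1`: for large `x` the integrand is of order
`x^{-α} · x^{-α}`. As `μ` is the restriction of `ν` to `[0,1]`, this is the upper bound. For the
lower bound, every `x ∈ [r, 2r]` has `μ(B(x,r)) ≥ c (2r)^{-α} r`, and `μ [r, 2r]` is at least as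
large. So the correlation integral is `Θ(r^{2(1-α)})`, which pins the ratio of logarithms.
-/

open MeasureTheory Filter Metric Topology

/-- Correlation integral: `∫ μ(B(x,r)) dμ(x)`. -/
noncomputable def corrIntegral {X : Type*} [PseudoMetricSpace X] [MeasurableSpace X]
    (μ : Measure X) (r : ℝ) : ℝ :=
  ∫ x, (μ (ball x r)).toReal ∂μ

open Set Asymptotics
open scoped ENNReal

theorem tendsto_log_div_log_of_isTheta_rpow {F : ℝ → ℝ} {p : ℝ}
    (hF : F =Θ[𝓝[>] 0] fun r => r ^ p) :
    Tendsto (fun r => Real.log (F r) / Real.log r) (𝓝[>] 0) (𝓝 p) := by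
  obtain ⟨A, hA, hFA⟩ := hF.1.exists_pos
  obtain ⟨k, hk, hFk⟩ := hF.2.exists_pos
  have hlim (B : ℝ) : Tendsto (fun r => p + B / Real.log r) (𝓝[>] 0) (𝓝 p) := by
    simpa using (tendsto_const_nhds.div_atBot Real.tendsto_log_nhdsGT_zero).const_add p
  have hbounds : ∀ᶠ r in 𝓝[>] 0, p + Real.log A / Real.log r ≤ Real.log (F r) / Real.log r ∧
      Real.log (F r) / Real.log r ≤ p + -Real.log k / Real.log r := by
    filter_upwards [hFA.bound, hFk.bound, Ioo_mem_nhdsGT one_pos] with r hAr hkr ⟨hr0, hr1⟩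
    have hrp : 0 < r ^ p := Real.rpow_pos_of_pos hr0 p
    have hlogr : Real.log r < 0 := Real.log_neg hr0 hr1
    rw [Real.norm_of_nonneg hrp.le, Real.norm_eq_abs] at hAr hkr
    have hFr : 0 < |F r| := pos_of_mul_pos_right (hrp.trans_le hkr) hk.le
    have hlog_rpow : Real.log (r ^ p) = p * Real.log r := Real.log_rpow hr0 p
    have hupper : Real.log |F r| ≤ Real.log A + p * Real.log r := by
      rw [← hlog_rpow, ← Real.log_mul hA.ne' hrp.ne']
      exact Real.log_le_log hFr hAr
    have hlower : p * Real.log r ≤ Real.log k + Real.log |F r| := by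
      rw [← hlog_rpow, ← Real.log_mul hk.ne' hFr.ne']
      exact Real.log_le_log hrp hkr
    have hsplit (B : ℝ) : p + B / Real.log r = (B + p * Real.log r) / Real.log r := by
      rw [add_div, mul_div_cancel_right₀ p hlogr.ne, add_comm]
    rw [← Real.log_abs (F r), hsplit, hsplit, div_le_div_right_of_neg hlogr,
      div_le_div_right_of_neg hlogr]
    constructor <;> linarith
  exact tendsto_of_tendsto_of_tendsto_of_le_of_le' (hlim _) (hlim _)
    (hbounds.mono fun _ => And.left) (hbounds.mono fun _ => And.right)

section Ball

variable {X : Type*} [PseudoMetricSpace X] [MeasurableSpace X] [OpensMeasurableSpace X]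
  [SecondCountableTopology X]

theorem measurable_measure_ball (μ : Measure X) [SFinite μ] (r : ℝ) :
    Measurable fun x => μ (ball x r) :=
  measurable_measure_prodMk_left
    (measurableSet_lt (measurable_snd.dist measurable_fst) measurable_const)

theorem corrIntegral_eq_toReal_lintegral (μ : Measure X) [IsFiniteMeasure μ] (r : ℝ) :
    corrIntegral μ r = (∫⁻ x, μ (ball x r) ∂μ).toReal :=
  integral_toReal (measurable_measure_ball μ r).aemeasurable
    (ae_of_all _ fun _ => measure_lt_top μ _)

end Ball

theorem lintegral_comp_mul_left (f : ℝ → ℝ≥0∞) {a : ℝ} (ha : 0 < a) :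
    ∫⁻ x, f (a * x) = ENNReal.ofReal a⁻¹ * ∫⁻ x, f x :=
  calc ∫⁻ x, f (a * x) = ∫⁻ x, f x ∂(Measure.map (a * ·) volume) :=
        (lintegral_map_equiv f (Homeomorph.mulLeft₀ a ha.ne').toMeasurableEquiv).symm
    _ = ENNReal.ofReal a⁻¹ * ∫⁻ x, f x := by
        rw [Real.map_volume_mul_left ha.ne', lintegral_smul_measure, abs_of_pos (inv_pos.2 ha),
          smul_eq_mul]

noncomputable def powerDensity (α c : ℝ) : ℝ → ℝ≥0∞ :=
  (Ioi 0).indicator fun x => ENNReal.ofReal (c * x ^ (-α))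

noncomputable def powerMeasure (α c : ℝ) : Measure ℝ :=
  volume.withDensity (powerDensity α c)

instance (α c : ℝ) : SFinite (powerMeasure α c) := by
  unfold powerMeasure
  infer_instance

section PowerMeasure

variable {α c : ℝ}

theorem measurable_powerDensity (α c : ℝ) : Measurable (powerDensity α c) :=
  (measurable_const.mul (measurable_id.pow_const _)).ennreal_ofReal.indicator measurableSet_Ioi

theorem powerDensity_of_pos {x : ℝ} (hx : 0 < x) :
    powerDensity α c x = ENNReal.ofReal (c * x ^ (-α)) :=
  indicator_of_mem (mem_Ioi.2 hx) _

theorem powerDensity_mul_left {r : ℝ} (hr : 0 < r) (x : ℝ) :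
    powerDensity α c (r * x) = ENNReal.ofReal (r ^ (-α)) * powerDensity α c x := by
  by_cases hx : 0 < x
  · rw [powerDensity_of_pos (mul_pos hr hx), powerDensity_of_pos hx,
      ← ENNReal.ofReal_mul (Real.rpow_nonneg hr.le _), Real.mul_rpow hr.le hx.le]
    ring_nf
  · rw [powerDensity, indicator_of_notMem (by simpa [mul_pos_iff_of_pos_left hr] using hx),
      indicator_of_notMem (by simpa using hx), mul_zero]

theorem lintegral_powerMeasure_eq_mul_lintegral_comp_mul_left {g : ℝ → ℝ≥0∞}
    (hg : Measurable g) {r : ℝ} (hr : 0 < r) :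
    ∫⁻ x, g x ∂powerMeasure α c
      = ENNReal.ofReal (r ^ (1 - α)) * ∫⁻ y, g (r * y) ∂powerMeasure α c := by
  have hr_rpow : r * r ^ (-α) = r ^ (1 - α) := by
    rw [sub_eq_add_neg, Real.rpow_add hr, Real.rpow_one]
  rw [powerMeasure, lintegral_withDensity_eq_lintegral_mul _ (measurable_powerDensity α c) hg,
    lintegral_withDensity_eq_lintegral_mul _ (measurable_powerDensity α c)
      (g := fun y => g (r * y)) (hg.comp (measurable_const_mul r))]
  calc ∫⁻ x, (powerDensity α c * g) x
      = ENNReal.ofReal r * ∫⁻ y, (powerDensity α c * g) (r * y) := by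
        rw [lintegral_comp_mul_left _ hr, ← mul_assoc, ← ENNReal.ofReal_mul hr.le,
          mul_inv_cancel₀ hr.ne', ENNReal.ofReal_one, one_mul]
    _ = ENNReal.ofReal r *
          ∫⁻ y, ENNReal.ofReal (r ^ (-α)) * (powerDensity α c * fun y => g (r * y)) y := by
        simp only [Pi.mul_apply, powerDensity_mul_left hr, mul_assoc]
    _ = ENNReal.ofReal (r ^ (1 - α)) * ∫⁻ y, (powerDensity α c * fun y => g (r * y)) y := by
        rw [lintegral_const_mul' _ _ ENNReal.ofReal_ne_top, ← mul_assoc,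
          ← ENNReal.ofReal_mul hr.le, hr_rpow]

theorem powerMeasure_eq_mul_powerMeasure_preimage_mul_left {s : Set ℝ} (hs : MeasurableSet s)
    {r : ℝ} (hr : 0 < r) :
    powerMeasure α c s = ENNReal.ofReal (r ^ (1 - α)) * powerMeasure α c ((r * ·) ⁻¹' s) := by
  simpa [lintegral_indicator_one hs, lintegral_indicator_one (hs.preimage (measurable_const_mul r)),
    ← indicator_comp_right] using
    lintegral_powerMeasure_eq_mul_lintegral_comp_mul_left (α := α) (c := c)
      (measurable_one.indicator hs) hr

theorem powerMeasure_ball_mul_left (x : ℝ) {r : ℝ} (hr : 0 < r) :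
    powerMeasure α c (ball (r * x) r)
      = ENNReal.ofReal (r ^ (1 - α)) * powerMeasure α c (ball x 1) := by
  rw [powerMeasure_eq_mul_powerMeasure_preimage_mul_left measurableSet_ball hr]
  congr 2
  ext y
  simp only [mem_preimage, mem_ball, Real.dist_eq, ← mul_sub, abs_mul, abs_of_pos hr,
    mul_lt_iff_lt_one_right hr]

theorem lintegral_powerMeasure_ball {r : ℝ} (hr : 0 < r) :
    ∫⁻ x, powerMeasure α c (ball x r) ∂powerMeasure α c
      = ENNReal.ofReal (r ^ (2 * (1 - α)))
          * ∫⁻ x, powerMeasure α c (ball x 1) ∂powerMeasure α c := by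
  rw [lintegral_powerMeasure_eq_mul_lintegral_comp_mul_left (measurable_measure_ball _ r) hr]
  simp_rw [powerMeasure_ball_mul_left _ hr]
  rw [lintegral_const_mul' _ _ ENNReal.ofReal_ne_top, ← mul_assoc,
    ← ENNReal.ofReal_mul (Real.rpow_nonneg hr.le _), ← Real.rpow_add hr, two_mul]

theorem powerMeasure_Ioo_le (hc : 0 ≤ c) (hα : 0 ≤ α) {a b : ℝ} (ha : 0 < a) :
    powerMeasure α c (Ioo a b) ≤ ENNReal.ofReal (c * a ^ (-α) * (b - a)) := by
  rw [powerMeasure, withDensity_apply _ measurableSet_Ioo]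
  calc ∫⁻ t in Ioo a b, powerDensity α c t ≤ ∫⁻ _ in Ioo a b, ENNReal.ofReal (c * a ^ (-α)) := by
        refine setLIntegral_mono measurable_const fun t ht => ?_
        rw [powerDensity_of_pos (ha.trans ht.1)]
        exact ENNReal.ofReal_le_ofReal (mul_le_mul_of_nonneg_left
          (Real.rpow_le_rpow_of_nonpos ha ht.1.le (neg_nonpos.2 hα)) hc)
    _ = ENNReal.ofReal (c * a ^ (-α) * (b - a)) := by
        rw [setLIntegral_const, Real.volume_Ioo, ← ENNReal.ofReal_mul (by positivity)]

theorem ofReal_le_powerMeasure_Ioo (hc : 0 ≤ c) (hα : 0 ≤ α) {a b : ℝ} (ha : 0 ≤ a)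
    (hab : a ≤ b) : ENNReal.ofReal (c * b ^ (-α) * (b - a)) ≤ powerMeasure α c (Ioo a b) := by
  rw [powerMeasure, withDensity_apply _ measurableSet_Ioo]
  calc ENNReal.ofReal (c * b ^ (-α) * (b - a))
      = ∫⁻ _ in Ioo a b, ENNReal.ofReal (c * b ^ (-α)) := by
        rw [setLIntegral_const, Real.volume_Ioo,
          ← ENNReal.ofReal_mul (mul_nonneg hc (Real.rpow_nonneg (ha.trans hab) _))]
    _ ≤ ∫⁻ t in Ioo a b, powerDensity α c t := by
        refine setLIntegral_mono (measurable_powerDensity α c) fun t ht => ?_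
        have ht0 : 0 < t := ha.trans_lt ht.1
        rw [powerDensity_of_pos ht0]
        exact ENNReal.ofReal_le_ofReal (mul_le_mul_of_nonneg_left
          (Real.rpow_le_rpow_of_nonpos ht0 ht.2.le (neg_nonpos.2 hα)) hc)

theorem powerMeasure_Iio_lt_top (hα : α < 1) {L : ℝ} (hL : 0 < L) :
    powerMeasure α c (Iio L) < ∞ := by
  rw [powerMeasure, withDensity_apply _ measurableSet_Iio, powerDensity,
    lintegral_indicator measurableSet_Ioi, Measure.restrict_restrict measurableSet_Ioi,
    Ioi_inter_Iio]
  exact IntegrableOn.setLIntegral_lt_top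
    (((intervalIntegral.integrableOn_Ioo_rpow_iff hL).2 (by linarith : -1 < -α)).const_mul c)

theorem setLIntegral_Ioi_rpow_powerMeasure_lt_top {β : ℝ} (hαβ : 1 < α + β) {a : ℝ}
    (ha : 0 < a) : ∫⁻ x in Ioi a, ENNReal.ofReal (x ^ (-β)) ∂powerMeasure α c < ∞ := by
  rw [powerMeasure, setLIntegral_withDensity_eq_setLIntegral_mul _ (measurable_powerDensity α c)
    (g := fun x => ENNReal.ofReal (x ^ (-β))) (measurable_id.pow_const _).ennreal_ofReal
    measurableSet_Ioi]
  calc ∫⁻ x in Ioi a, (powerDensity α c * fun x => ENNReal.ofReal (x ^ (-β))) x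
      = ∫⁻ x in Ioi a, ENNReal.ofReal (c * x ^ (-(α + β))) := by
        refine setLIntegral_congr_fun measurableSet_Ioi fun x hx => ?_
        have hx0 : 0 < x := ha.trans hx
        rw [Pi.mul_apply, powerDensity_of_pos hx0,
          ← ENNReal.ofReal_mul' (Real.rpow_nonneg hx0.le _), mul_assoc, ← Real.rpow_add hx0,
          neg_add]
    _ < ∞ := IntegrableOn.setLIntegral_lt_top
        ((integrableOn_Ioi_rpow_of_lt (by linarith : -(α + β) < -1) ha).const_mul c)

theorem powerMeasure_ball_one_le (hc : 0 ≤ c) (hα : 0 ≤ α) {x : ℝ} (hx : 2 ≤ x) :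
    powerMeasure α c (ball x 1) ≤ ENNReal.ofReal (2 ^ (1 + α) * c * x ^ (-α)) := by
  have hx0 : 0 < x := by linarith
  have hshift : (x - 1) ^ (-α) ≤ 2 ^ α * x ^ (-α) :=
    calc (x - 1) ^ (-α) ≤ (x / 2) ^ (-α) :=
          Real.rpow_le_rpow_of_nonpos (by positivity) (by linarith) (neg_nonpos.2 hα)
      _ = 2 ^ α * x ^ (-α) := by
          rw [Real.div_rpow hx0.le zero_le_two, Real.rpow_neg zero_le_two, div_inv_eq_mul,
            mul_comm]
  rw [Real.ball_eq_Ioo]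
  refine (powerMeasure_Ioo_le hc hα (by linarith)).trans (ENNReal.ofReal_le_ofReal ?_)
  calc c * (x - 1) ^ (-α) * (x + 1 - (x - 1)) = 2 * c * (x - 1) ^ (-α) := by ring
    _ ≤ 2 * c * (2 ^ α * x ^ (-α)) := mul_le_mul_of_nonneg_left hshift (by positivity)
    _ = 2 ^ (1 + α) * c * x ^ (-α) := by
        rw [Real.rpow_add two_pos, Real.rpow_one]
        ring

theorem lintegral_powerMeasure_ball_one_lt_top (hc : 0 ≤ c) (hα : 1 / 2 < α) (hα1 : α < 1) :
    ∫⁻ x, powerMeasure α c (ball x 1) ∂powerMeasure α c < ∞ := by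
  have hIio : powerMeasure α c (Iio 3) < ∞ := powerMeasure_Iio_lt_top hα1 three_pos
  rw [← lintegral_add_compl _ measurableSet_Iic, compl_Iic]
  refine ENNReal.add_lt_top.2 ⟨?_, ?_⟩
  · calc ∫⁻ x in Iic 2, powerMeasure α c (ball x 1) ∂powerMeasure α c
        ≤ ∫⁻ _ in Iic 2, powerMeasure α c (Iio 3) ∂powerMeasure α c := by
          refine setLIntegral_mono measurable_const fun x hx => measure_mono ?_
          rw [Real.ball_eq_Ioo]
          exact Ioo_subset_Iio_self.trans (Iio_subset_Iio (by linarith [mem_Iic.1 hx]))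
      _ = powerMeasure α c (Iio 3) * powerMeasure α c (Iic 2) := setLIntegral_const _ _
      _ < ∞ := ENNReal.mul_lt_top hIio
          ((measure_mono (Iic_subset_Iio.2 (by norm_num : (2 : ℝ) < 3))).trans_lt hIio)
  · calc ∫⁻ x in Ioi 2, powerMeasure α c (ball x 1) ∂powerMeasure α c
        ≤ ∫⁻ x in Ioi 2, ENNReal.ofReal (2 ^ (1 + α) * c) * ENNReal.ofReal (x ^ (-α))
            ∂powerMeasure α c := by
          refine setLIntegral_mono (by fun_prop) fun x hx => ?_
          rw [← ENNReal.ofReal_mul (by positivity)]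
          exact powerMeasure_ball_one_le hc (by linarith) (le_of_lt hx)
      _ < ∞ := by
          rw [lintegral_const_mul' _ _ ENNReal.ofReal_ne_top]
          exact ENNReal.mul_lt_top ENNReal.ofReal_lt_top
            (setLIntegral_Ioi_rpow_powerMeasure_lt_top (by linarith) two_pos)

theorem powerMeasure_restrict_Icc (hα : α ≠ 0) :
    (powerMeasure α c).restrict (Icc 0 1) = volume.withDensity
      fun x => ENNReal.ofReal (indicator (Icc (0 : ℝ) 1) (fun x => c * x ^ (-α)) x) := by
  rw [powerMeasure, restrict_withDensity measurableSet_Icc,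
    ← withDensity_indicator measurableSet_Icc]
  congr 1
  funext x
  by_cases hx : x ∈ Icc (0 : ℝ) 1
  · rw [indicator_of_mem hx, indicator_of_mem hx]
    rcases hx.1.eq_or_lt with rfl | hx0
    · rw [powerDensity, indicator_of_notMem self_notMem_Ioi, Real.zero_rpow (neg_ne_zero.2 hα),
        mul_zero, ENNReal.ofReal_zero]
    · exact powerDensity_of_pos hx0
  · rw [indicator_of_notMem hx, indicator_of_notMem hx, ENNReal.ofReal_zero]

theorem isFiniteMeasure_powerMeasure_restrict_Icc (hα : α < 1) :
    IsFiniteMeasure ((powerMeasure α c).restrict (Icc 0 1)) :=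
  isFiniteMeasure_restrict.2 <| ne_of_lt <|
    (measure_mono fun _ hx => mem_Iio.2 (hx.2.trans_lt one_lt_two)).trans_lt
      (powerMeasure_Iio_lt_top hα two_pos)

theorem ofReal_le_lintegral_powerMeasure_restrict_Icc_ball (hc : 0 ≤ c) (hα : 0 ≤ α) {r : ℝ}
    (hr : 0 < r) (hr1 : 2 * r ≤ 1) :
    ENNReal.ofReal ((c * 2 ^ (-α)) ^ 2 * r ^ (2 * (1 - α)))
      ≤ ∫⁻ x, (powerMeasure α c).restrict (Icc 0 1) (ball x r)
          ∂(powerMeasure α c).restrict (Icc 0 1) := by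
  set μ := (powerMeasure α c).restrict (Icc 0 1)
  set m := ENNReal.ofReal (c * (2 * r) ^ (-α) * r)
  have hIoo {a b : ℝ} (ha : 0 ≤ a) (hab : a ≤ b) (hb : b ≤ 2 * r) :
      ENNReal.ofReal (c * b ^ (-α) * (b - a)) ≤ μ (Ioo a b) := by
    have hsub : Ioo a b ⊆ Icc 0 1 := fun t ht => ⟨ha.trans ht.1.le, by linarith [ht.2]⟩
    rw [Measure.restrict_eq_self _ hsub]
    exact ofReal_le_powerMeasure_Ioo hc hα ha hab
  have hball (x : ℝ) (hx : x ∈ Icc r (2 * r)) : m ≤ μ (ball x r) := by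
    have hx0 : 0 < x := hr.trans_le hx.1
    calc m ≤ ENNReal.ofReal (c * x ^ (-α) * (x - (x - r))) := by
          rw [sub_sub_cancel]
          exact ENNReal.ofReal_le_ofReal (mul_le_mul_of_nonneg_right (mul_le_mul_of_nonneg_left
            (Real.rpow_le_rpow_of_nonpos hx0 hx.2 (neg_nonpos.2 hα)) hc) hr.le)
      _ ≤ μ (Ioo (x - r) x) := hIoo (by linarith [hx.1]) (by linarith) hx.2
      _ ≤ μ (ball x r) := by
          rw [Real.ball_eq_Ioo]
          exact measure_mono (Ioo_subset_Ioo_right (by linarith))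
  have hIcc : m ≤ μ (Icc r (2 * r)) :=
    calc m = ENNReal.ofReal (c * (2 * r) ^ (-α) * (2 * r - r)) := by
          rw [show 2 * r - r = r by ring]
      _ ≤ μ (Ioo r (2 * r)) := hIoo hr.le (by linarith) le_rfl
      _ ≤ μ (Icc r (2 * r)) := measure_mono Ioo_subset_Icc_self
  have hm : ENNReal.ofReal ((c * 2 ^ (-α)) ^ 2 * r ^ (2 * (1 - α))) = m * m := by
    rw [← ENNReal.ofReal_mul (by positivity), Real.mul_rpow zero_le_two hr.le, mul_comm 2 (1 - α),
      Real.rpow_mul hr.le, Real.rpow_two, sub_eq_add_neg, Real.rpow_add hr, Real.rpow_one]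
    ring_nf
  calc ENNReal.ofReal ((c * 2 ^ (-α)) ^ 2 * r ^ (2 * (1 - α))) = m * m := hm
    _ ≤ m * μ (Icc r (2 * r)) := by gcongr
    _ = ∫⁻ _ in Icc r (2 * r), m ∂μ := (setLIntegral_const _ _).symm
    _ ≤ ∫⁻ x in Icc r (2 * r), μ (ball x r) ∂μ :=
        setLIntegral_mono (measurable_measure_ball μ r) hball
    _ ≤ ∫⁻ x, μ (ball x r) ∂μ := setLIntegral_le_lintegral _ _

theorem corrIntegral_powerMeasure_restrict_Icc_isTheta (hc : 0 < c) (hα : 1 / 2 < α)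
    (hα1 : α < 1) :
    corrIntegral ((powerMeasure α c).restrict (Icc 0 1)) =Θ[𝓝[>] 0]
      fun r => r ^ (2 * (1 - α)) := by
  have := isFiniteMeasure_powerMeasure_restrict_Icc (c := c) hα1
  set μ := (powerMeasure α c).restrict (Icc 0 1)
  set K := ∫⁻ x, powerMeasure α c (ball x 1) ∂powerMeasure α c
  have hK : K ≠ ∞ := (lintegral_powerMeasure_ball_one_lt_top hc.le hα hα1).ne
  have hupper {r : ℝ} (hr : 0 < r) :
      ∫⁻ x, μ (ball x r) ∂μ ≤ ENNReal.ofReal (r ^ (2 * (1 - α))) * K :=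
    (lintegral_mono' Measure.restrict_le_self fun x => Measure.le_iff'.1 Measure.restrict_le_self
      _).trans_eq (lintegral_powerMeasure_ball hr)
  have hfin {r : ℝ} (hr : 0 < r) : ∫⁻ x, μ (ball x r) ∂μ ≠ ∞ :=
    ne_top_of_le_ne_top (ENNReal.mul_ne_top ENNReal.ofReal_ne_top hK) (hupper hr)
  refine ⟨IsBigO.of_bound K.toReal ?_, IsBigO.of_bound ((c * 2 ^ (-α)) ^ 2)⁻¹ ?_⟩
  · filter_upwards [self_mem_nhdsWithin] with r (hr : 0 < r)
    rw [corrIntegral_eq_toReal_lintegral, Real.norm_of_nonneg ENNReal.toReal_nonneg,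
      Real.norm_of_nonneg (Real.rpow_nonneg hr.le _), mul_comm]
    calc (∫⁻ x, μ (ball x r) ∂μ).toReal ≤ (ENNReal.ofReal (r ^ (2 * (1 - α))) * K).toReal :=
          ENNReal.toReal_mono (ENNReal.mul_ne_top ENNReal.ofReal_ne_top hK) (hupper hr)
      _ = r ^ (2 * (1 - α)) * K.toReal := by
          rw [ENNReal.toReal_mul, ENNReal.toReal_ofReal (Real.rpow_nonneg hr.le _)]
  · filter_upwards [Ioo_mem_nhdsGT one_half_pos] with r ⟨hr0, hr1⟩
    rw [corrIntegral_eq_toReal_lintegral, Real.norm_of_nonneg ENNReal.toReal_nonneg,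
      Real.norm_of_nonneg (Real.rpow_nonneg hr0.le _), inv_mul_eq_div,
      le_div_iff₀' (by positivity)]
    exact (ENNReal.ofReal_le_iff_le_toReal (hfin hr0)).1
      (ofReal_le_lintegral_powerMeasure_restrict_Icc_ball hc.le (by linarith) hr0 (by linarith))

end PowerMeasure

theorem correlation_dimension_of_power_density_general (α c : ℝ)
    (hα : α ∈ Set.Ioo (1/2 : ℝ) 1) (hc : 0 < c)
    (μ : Measure ℝ)
    (hμ : μ = volume.withDensity
      (fun x => ENNReal.ofReal (Set.indicator (Set.Icc (0:ℝ) 1) (fun x => c * x ^ (-α)) x))) :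
    Tendsto (fun r : ℝ => Real.log (corrIntegral μ r) / Real.log r)
      (𝓝[>] 0) (𝓝 (2 * (1 - α))) := by
  obtain ⟨hα_gt, hα_lt⟩ := hα
  rw [hμ, ← powerMeasure_restrict_Icc (by linarith : 0 < α).ne']
  exact tendsto_log_div_log_of_isTheta_rpow
    (corrIntegral_powerMeasure_restrict_Icc_isTheta hc hα_gt hα_lt)

/-- For the probability measure on `[0,1]` with density proportional to `x ^ (-α)`,
`α ∈ (1/2, 1)`, the correlation dimension exists and equals `2(1-α)`. -/
theorem correlation_dimension_of_power_density (α c : ℝ)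
    (hα : α ∈ Set.Ioo (1/2 : ℝ) 1) (hc : 0 < c)
    (μ : Measure ℝ)
    (hμ : μ = volume.withDensity
      (fun x => ENNReal.ofReal (Set.indicator (Set.Icc (0:ℝ) 1) (fun x => c * x ^ (-α)) x)))
    (hprob : IsProbabilityMeasure μ) :
    Tendsto (fun r : ℝ => Real.log (corrIntegral μ r) / Real.log r)
      (𝓝[>] 0) (𝓝 (2 * (1 - α))) :=
  correlation_dimension_of_power_density_general α c hα hc μ hμ
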